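/- arXiv:2105.08180 — 5 statements merged into one kernel-verified Lean document; each statement's English description precedes it below -/
import Mathlib

section
/- For every γ > 0 and every e ∈ ℝ, the infimum over a ∈ ℝ of the function a ↦ (e − a)² + γ·|a| is attained and equals the Huber loss ρ_γ(e), where ρ_γ(e) = e² if |e| ≤ γ/2 and ρ_γ(e) = γ·|e| − γ²/4 if |e| > γ/2. -/
/-- The Huber loss with parameter `γ`. -/
noncomputable def huber (γ e : ℝ) : ℝ :=
  if |e| ≤ γ / 2 then e ^ 2 else γ * |e| - γ ^ 2 / 4

/-- For every `γ > 0` and `e : ℝ`, the infimum over `a` of `(e - a)² + γ|a|`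
is attained and equals the Huber loss `huber γ e`. -/
theorem huber_isLeast (γ : ℝ) (hγ : 0 < γ) (e : ℝ) :
    IsLeast (Set.range fun a : ℝ => (e - a) ^ 2 + γ * |a|) (huber γ e) := by
  constructor
  · unfold huber
    split_ifs with h
    · exact ⟨0, by simp⟩
    · push_neg at h
      rcases le_or_gt 0 e with he | he
      · refine ⟨e - γ / 2, ?_⟩
        have he' : γ / 2 < e := by rwa [abs_of_nonneg he] at h
        simp only [abs_of_nonneg he, abs_of_nonneg (show (0:ℝ) ≤ e - γ / 2 by linarith)]
        ring
      · refine ⟨e + γ / 2, ?_⟩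
        have he' : γ / 2 < -e := by rwa [abs_of_neg he] at h
        simp only [abs_of_neg he, abs_of_nonpos (show e + γ / 2 ≤ (0:ℝ) by linarith)]
        ring
  · rintro x ⟨a, rfl⟩
    show huber γ e ≤ (e - a) ^ 2 + γ * |a|
    unfold huber
    split_ifs with h
    · nlinarith [le_abs_self (e * a), abs_mul e a,
        mul_le_mul_of_nonneg_right h (abs_nonneg a), sq_nonneg a, abs_nonneg a,
        mul_nonneg hγ.le (abs_nonneg a)]
    · nlinarith [sq_nonneg (|e - a| - γ / 2), sq_abs (e - a),
        abs_sub_abs_le_abs_sub e a, abs_nonneg a, abs_nonneg (e - a), hγ]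
end

section
/- Let ι be a finite index type, r : ι → ℝ, and γ > 0. Then the function F(a) = Σ_{i ∈ ι} (r i − a i)² + γ · Σ_{i ∈ ι} |a i| on (ι → ℝ) attains its minimum at the componentwise soft-threshold a* with a* i = S_{γ/2}(r i), and the minimum value equals Σ_{i ∈ ι} ρ_γ(r i). -/
/-- The scalar soft-thresholding operator with threshold `c`. -/
noncomputable def softThresh (c x : ℝ) : ℝ :=
  Real.sign x * max (|x| - c) 0

lemma scalar_eq (γ x : ℝ) (hγ : 0 < γ) :
    (x - softThresh (γ / 2) x) ^ 2 + γ * |softThresh (γ / 2) x| = huber γ x := by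
  unfold huber softThresh
  split_ifs with h
  · have hmax : max (|x| - γ / 2) 0 = 0 := max_eq_right (by linarith)
    simp [hmax]
  · push_neg at h
    have hmax : max (|x| - γ / 2) 0 = |x| - γ / 2 := max_eq_left (by linarith)
    rw [hmax]
    have hx : x ≠ 0 := by
      intro h0; rw [h0] at h; simp at h; linarith
    rcases lt_or_gt_of_ne hx with hneg | hpos
    · rw [Real.sign_of_neg hneg, abs_of_neg hneg] at *
      rw [abs_of_nonpos (by nlinarith)]
      ring
    · rw [Real.sign_of_pos hpos, abs_of_pos hpos] at *
      rw [abs_of_nonneg (by nlinarith)]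
      ring

lemma scalar_le (γ x a : ℝ) (hγ : 0 < γ) :
    huber γ x ≤ (x - a) ^ 2 + γ * |a| := by
  unfold huber
  have h1 : a * x ≤ |a| * |x| := by rw [← abs_mul]; exact le_abs_self _
  split_ifs with h
  · nlinarith [abs_nonneg a, sq_abs a, sq_abs x]
  · push_neg at h
    have h2 : (|x| - |a|) ^ 2 ≤ (x - a) ^ 2 := by
      have ha := abs_sub_abs_le_abs_sub x a
      have hb := abs_sub_abs_le_abs_sub a x
      rw [abs_sub_comm a x] at hb
      nlinarith [sq_abs (x - a), abs_nonneg (x - a)]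
    nlinarith [sq_nonneg (|a| - |x| + γ / 2)]

/-- The separable objective `F(a) = Σᵢ (rᵢ - aᵢ)² + γ Σᵢ |aᵢ|` attains its minimum
at the componentwise soft-threshold `a* i = S_{γ/2}(r i)`, and the minimum value
equals `Σᵢ ρ_γ(rᵢ)`. -/
theorem separable_huber_min {ι : Type*} [Fintype ι] (r : ι → ℝ) (γ : ℝ) (hγ : 0 < γ) :
    (∀ a : ι → ℝ,
        (∑ i, (r i - softThresh (γ / 2) (r i)) ^ 2) +
            γ * ∑ i, |softThresh (γ / 2) (r i)| ≤
          (∑ i, (r i - a i) ^ 2) + γ * ∑ i, |a i|) ∧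
    (∑ i, (r i - softThresh (γ / 2) (r i)) ^ 2) +
        γ * ∑ i, |softThresh (γ / 2) (r i)| = ∑ i, huber γ (r i) := by
  have key : (∑ i, (r i - softThresh (γ / 2) (r i)) ^ 2) +
      γ * ∑ i, |softThresh (γ / 2) (r i)| = ∑ i, huber γ (r i) := by
    rw [Finset.mul_sum, ← Finset.sum_add_distrib]
    exact Finset.sum_congr rfl fun i _ => scalar_eq γ (r i) hγ
  refine ⟨fun a => ?_, key⟩
  rw [key, Finset.mul_sum (s := Finset.univ) (f := fun i => |a i|), ← Finset.sum_add_distrib]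
  exact Finset.sum_le_sum fun i _ => scalar_le γ (r i) (a i) hγ
end

section
/- Let P be a type, ι a finite index type, r : P → ι → ℝ a residual map, R : P → ℝ a regularizer, and γ > 0. Define F(θ) = Σ_{i ∈ ι} ρ_γ(r θ i) + R(θ) on P and G(θ, a) = Σ_{i ∈ ι} (r θ i − a i)² + γ · Σ_{i ∈ ι} |a i| + R(θ) on P × (ι → ℝ). Then: (i) for every θ, the infimum of G(θ, ·) over a equals F(θ); and (ii) θ* is a global minimizer of F if and only if the pair (θ*, a*) with a* i = S_{γ/2}(r θ* i) is a global minimizer of G. -/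
lemma huber_le_aux (γ : ℝ) (hγ : 0 < γ) (e a : ℝ) :
    huber γ e ≤ (e - a) ^ 2 + γ * |a| := by
  unfold huber
  split_ifs with h
  · nlinarith [abs_nonneg a, abs_nonneg e, le_abs_self (e*a), abs_mul e a,
      neg_abs_le (e*a), mul_le_mul_of_nonneg_right h (abs_nonneg a), sq_nonneg a]
  · push_neg at h
    have h1 : γ * |e| ≤ γ * |e - a| + γ * |a| := by
      have := abs_sub_abs_le_abs_sub e a
      nlinarith
    nlinarith [sq_nonneg (|e - a| - γ / 2), sq_abs (e - a)]

lemma huber_eq_aux (γ : ℝ) (hγ : 0 < γ) (e : ℝ) :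
    (e - softThresh (γ / 2) e) ^ 2 + γ * |softThresh (γ / 2) e| = huber γ e := by
  unfold huber softThresh
  split_ifs with h
  · have : max (|e| - γ / 2) 0 = 0 := max_eq_right (by linarith)
    simp [this]
  · push_neg at h
    have he : e ≠ 0 := by
      intro h0; rw [h0] at h; simp at h; linarith
    have hm : max (|e| - γ / 2) 0 = |e| - γ / 2 := max_eq_left (by linarith)
    rw [hm]
    rcases lt_or_gt_of_ne he with h0 | h0
    · rw [Real.sign_of_neg h0, abs_of_neg h0] at *
      rw [abs_of_neg (by nlinarith : (-1 : ℝ) * (-e - γ/2) < 0)]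
      ring
    · rw [Real.sign_of_pos h0, abs_of_pos h0] at *
      rw [abs_of_pos (by nlinarith : (0:ℝ) < 1 * (e - γ/2))]
      ring

lemma sum_huber_le_aux {ι : Type*} [Fintype ι] (γ : ℝ) (hγ : 0 < γ)
    (e a : ι → ℝ) :
    (∑ i, huber γ (e i)) ≤ (∑ i, (e i - a i) ^ 2) + γ * ∑ i, |a i| := by
  rw [Finset.mul_sum, ← Finset.sum_add_distrib]
  exact Finset.sum_le_sum fun i _ => huber_le_aux γ hγ (e i) (a i)

lemma sum_huber_eq_aux {ι : Type*} [Fintype ι] (γ : ℝ) (hγ : 0 < γ)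
    (e : ι → ℝ) :
    (∑ i, (e i - softThresh (γ / 2) (e i)) ^ 2) + γ * ∑ i, |softThresh (γ / 2) (e i)|
      = ∑ i, huber γ (e i) := by
  rw [Finset.mul_sum, ← Finset.sum_add_distrib]
  exact Finset.sum_congr rfl fun i _ => huber_eq_aux γ hγ (e i)

/-- Proposition 1 (abstract form):
(i) for every `θ`, the infimum of `G(θ, ·)` over `a` equals `F(θ)`;
(ii) `θ*` is a global minimizer of `F` iff `(θ*, a*)` with `a* i = S_{γ/2}(r θ* i)`
is a global minimizer of `G`, where
`F(θ) = Σᵢ ρ_γ(r θ i) + R(θ)` and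
`G(θ, a) = Σᵢ (r θ i - a i)² + γ Σᵢ |a i| + R(θ)`. -/
theorem huber_outlier_equivalence {P : Type*} {ι : Type*} [Fintype ι]
    (r : P → ι → ℝ) (R : P → ℝ) (γ : ℝ) (hγ : 0 < γ) :
    (∀ θ : P,
      IsGLB (Set.range fun a : ι → ℝ =>
          (∑ i, (r θ i - a i) ^ 2) + γ * ∑ i, |a i| + R θ)
        ((∑ i, huber γ (r θ i)) + R θ)) ∧
    (∀ θs : P,
      (∀ θ : P, (∑ i, huber γ (r θs i)) + R θs ≤ (∑ i, huber γ (r θ i)) + R θ) ↔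
      (∀ (θ : P) (a : ι → ℝ),
        (∑ i, (r θs i - softThresh (γ / 2) (r θs i)) ^ 2) +
            γ * (∑ i, |softThresh (γ / 2) (r θs i)|) + R θs ≤
          (∑ i, (r θ i - a i) ^ 2) + γ * (∑ i, |a i|) + R θ)) := by
  constructor
  · intro θ
    constructor
    · rintro x ⟨a, rfl⟩
      have := sum_huber_le_aux γ hγ (r θ) a
      dsimp only
      linarith
    · intro lb hlb
      have hmem : ((∑ i, huber γ (r θ i)) + R θ) ∈
          Set.range fun a : ι → ℝ =>
            (∑ i, (r θ i - a i) ^ 2) + γ * ∑ i, |a i| + R θ := by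
        refine ⟨fun i => softThresh (γ / 2) (r θ i), ?_⟩
        have := sum_huber_eq_aux γ hγ (r θ)
        dsimp only
        linarith
      exact hlb hmem
  · intro θs
    constructor
    · intro h θ a
      have h1 := sum_huber_eq_aux γ hγ (r θs)
      have h2 := sum_huber_le_aux γ hγ (r θ) a
      have h3 := h θ
      linarith
    · intro h θ
      have h1 := sum_huber_eq_aux γ hγ (r θs)
      have h2 := sum_huber_eq_aux γ hγ (r θ)
      have h3 := h θ (fun i => softThresh (γ / 2) (r θ i))
      linarith
end

section
/- Let E be a finite-dimensional real inner product space, let L > 0, λ > 0, λ_x > 0, and g, w′ ∈ E. Then the function w ↦ ⟪g, w − w′⟫ + (L/2)·‖w − w′‖² + λ_x·‖w‖ + (λ/2)·‖w‖² on E has a unique minimizer, namely w* = S_{λ_x/(L+λ)}( (L/(L+λ))·(w′ − (1/L)·g) ), where the block soft-thresholding operator is S_c(z) = 0 if ‖z‖ ≤ c and S_c(z) = (1 − c/‖z‖)·z otherwise. -/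
open scoped RealInnerProductSpace

/-- The block (group) soft-thresholding operator with threshold `c`. -/
noncomputable def blockSoftThresh {E : Type*} [NormedAddCommGroup E]
    [NormedSpace ℝ E] (c : ℝ) (z : E) : E :=
  if ‖z‖ ≤ c then 0 else (1 - c / ‖z‖) • z

section Aux

variable {E : Type*} [NormedAddCommGroup E] [InnerProductSpace ℝ E]

lemma bst_key (c : ℝ) (hc : 0 < c) (z w : E) :
    c * ‖blockSoftThresh c z‖ - ⟪z, blockSoftThresh c z⟫ + ‖blockSoftThresh c z‖ ^ 2
      ≤ c * ‖w‖ - ⟪z, w⟫ + ⟪blockSoftThresh c z, w⟫ := by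
  unfold blockSoftThresh
  by_cases h : ‖z‖ ≤ c
  · simp only [if_pos h, norm_zero, inner_zero_right, inner_zero_left]
    have h1 : ⟪z, w⟫ ≤ ‖z‖ * ‖w‖ := real_inner_le_norm z w
    nlinarith [norm_nonneg w]
  · simp only [if_neg h]
    push_neg at h
    have hz0 : (0:ℝ) < ‖z‖ := lt_trans hc h
    have ht : (0:ℝ) ≤ 1 - c / ‖z‖ := by
      rw [sub_nonneg, div_le_one hz0]; exact le_of_lt h
    have hnorm : ‖(1 - c / ‖z‖) • z‖ = (1 - c / ‖z‖) * ‖z‖ := by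
      rw [norm_smul, Real.norm_eq_abs, abs_of_nonneg ht]
    rw [hnorm, inner_smul_right, inner_smul_left, real_inner_self_eq_norm_sq]
    simp only [starRingEnd_apply, star_trivial]
    have h1 : ⟪z, w⟫ ≤ ‖z‖ * ‖w‖ := real_inner_le_norm z w
    have hd : c / ‖z‖ * ‖z‖ = c := div_mul_cancel₀ c (ne_of_gt hz0)
    have key : c * ‖w‖ - ⟪z, w⟫ + (1 - c / ‖z‖) * ⟪z, w⟫
        = (c / ‖z‖) * (‖z‖ * ‖w‖ - ⟪z, w⟫) := by
      field_simp
      ring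
    have lhs0 : c * ((1 - c / ‖z‖) * ‖z‖) - (1 - c / ‖z‖) * ‖z‖ ^ 2
        + ((1 - c / ‖z‖) * ‖z‖) ^ 2 = 0 := by
      field_simp
      ring
    rw [key, lhs0]
    have : 0 ≤ (c / ‖z‖) * (‖z‖ * ‖w‖ - ⟪z, w⟫) := by
      apply mul_nonneg (le_of_lt (div_pos hc hz0))
      linarith
    linarith

lemma quad_id (L lam lamx : ℝ) (hL : L ≠ 0) (hM : L + lam ≠ 0) (g w' w u : E) :
    (⟪g, w - w'⟫ + (L / 2) * ‖w - w'‖ ^ 2 + lamx * ‖w‖ + (lam / 2) * ‖w‖ ^ 2)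
      - (⟪g, u - w'⟫ + (L / 2) * ‖u - w'‖ ^ 2 + lamx * ‖u‖ + (lam / 2) * ‖u‖ ^ 2)
      - ((L + lam) / 2) * ‖w - u‖ ^ 2
    = (L + lam) *
        ((lamx / (L + lam) * ‖w‖ - ⟪(L / (L + lam)) • (w' - (1 / L) • g), w⟫ + ⟪u, w⟫)
          - (lamx / (L + lam) * ‖u‖ - ⟪(L / (L + lam)) • (w' - (1 / L) • g), u⟫ + ‖u‖ ^ 2)) := by
  simp only [inner_sub_right, inner_sub_left, inner_smul_left, inner_smul_right,
    @norm_sub_sq_real, real_inner_self_eq_norm_sq, starRingEnd_apply, star_trivial]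
  rw [real_inner_comm w' w, real_inner_comm u w, real_inner_comm w' u]
  field_simp
  ring

end Aux

/-- Proposition 2, proximal step: the function
`w ↦ ⟪g, w - w'⟫ + (L/2)‖w - w'‖² + λₓ‖w‖ + (λ/2)‖w‖²` has a unique minimizer,
namely `S_{λₓ/(L+λ)}((L/(L+λ))(w' - (1/L)g))`. -/
theorem prox_step_unique_min {E : Type*} [NormedAddCommGroup E]
    [InnerProductSpace ℝ E] [FiniteDimensional ℝ E]
    (L lam lamx : ℝ) (hL : 0 < L) (hlam : 0 < lam) (hlamx : 0 < lamx)
    (g w' : E) :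
    (∀ w : E,
        ⟪g, blockSoftThresh (lamx / (L + lam)) ((L / (L + lam)) • (w' - (1 / L) • g)) - w'⟫ +
            (L / 2) * ‖blockSoftThresh (lamx / (L + lam)) ((L / (L + lam)) • (w' - (1 / L) • g)) - w'‖ ^ 2 +
            lamx * ‖blockSoftThresh (lamx / (L + lam)) ((L / (L + lam)) • (w' - (1 / L) • g))‖ +
            (lam / 2) * ‖blockSoftThresh (lamx / (L + lam)) ((L / (L + lam)) • (w' - (1 / L) • g))‖ ^ 2 ≤
          ⟪g, w - w'⟫ + (L / 2) * ‖w - w'‖ ^ 2 + lamx * ‖w‖ + (lam / 2) * ‖w‖ ^ 2) ∧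
    (∀ w : E,
        (∀ v : E,
          ⟪g, w - w'⟫ + (L / 2) * ‖w - w'‖ ^ 2 + lamx * ‖w‖ + (lam / 2) * ‖w‖ ^ 2 ≤
            ⟪g, v - w'⟫ + (L / 2) * ‖v - w'‖ ^ 2 + lamx * ‖v‖ + (lam / 2) * ‖v‖ ^ 2) →
        w = blockSoftThresh (lamx / (L + lam)) ((L / (L + lam)) • (w' - (1 / L) • g))) := by
  have hM : (0:ℝ) < L + lam := by linarith
  have hMne : L + lam ≠ 0 := ne_of_gt hM
  set c : ℝ := lamx / (L + lam) with hc
  have hcpos : 0 < c := div_pos hlamx hM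
  set z : E := (L / (L + lam)) • (w' - (1 / L) • g) with hz
  set u : E := blockSoftThresh c z with hu
  -- quantitative minimality
  have main : ∀ w : E,
      (⟪g, u - w'⟫ + (L / 2) * ‖u - w'‖ ^ 2 + lamx * ‖u‖ + (lam / 2) * ‖u‖ ^ 2)
        + ((L + lam) / 2) * ‖w - u‖ ^ 2
      ≤ ⟪g, w - w'⟫ + (L / 2) * ‖w - w'‖ ^ 2 + lamx * ‖w‖ + (lam / 2) * ‖w‖ ^ 2 := by
    intro w
    have hid := quad_id L lam lamx (ne_of_gt hL) hMne g w' w u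
    have hkey := bst_key c hcpos z w
    rw [← hu] at hkey
    have hD : 0 ≤ (L + lam) *
        ((c * ‖w‖ - ⟪z, w⟫ + ⟪u, w⟫) - (c * ‖u‖ - ⟪z, u⟫ + ‖u‖ ^ 2)) := by
      apply mul_nonneg (le_of_lt hM)
      linarith
    rw [hc, hz] at hD
    linarith [hid, hD]
  constructor
  · intro w
    have := main w
    nlinarith [sq_nonneg ‖w - u‖, hM]
  · intro w hw
    have h1 := main w
    have h2 := hw u
    have h3 : ((L + lam) / 2) * ‖w - u‖ ^ 2 ≤ 0 := by linarith
    have h4 : ‖w - u‖ ^ 2 ≤ 0 := by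
      by_contra h
      push_neg at h
      nlinarith
    have h5 : ‖w - u‖ = 0 := by
      nlinarith [norm_nonneg (w - u)]
    have : w - u = 0 := norm_eq_zero.mp h5
    rw [hu, hc, hz] at this ⊢
    exact sub_eq_zero.mp this
end

section
/- Let P be a type, ι a finite index type, r : P → ι → ℝ, R : P → ℝ, and γ > 0. Define F(θ) = Σ_{i ∈ ι} ρ_γ(r θ i) + R(θ) and G(θ, a) = Σ_{i ∈ ι} (r θ i − a i)² + γ · Σ_{i ∈ ι} |a i| + R(θ). Then the infimum of F over P equals the infimum of G over P × (ι → ℝ). -/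
lemma huber_le (γ e a : ℝ) (hγ : 0 < γ) : huber γ e ≤ (e - a) ^ 2 + γ * |a| := by
  unfold huber
  split_ifs with h
  · have h1 : e * a ≤ |e| * |a| := by
      calc e * a ≤ |e * a| := le_abs_self _
        _ = |e| * |a| := abs_mul e a
    nlinarith [abs_nonneg a, sq_nonneg a]
  · push_neg at h
    have h1 : |e| ≤ |e - a| + |a| := by
      calc |e| = |(e - a) + a| := by ring_nf
        _ ≤ |e - a| + |a| := abs_add_le _ _
    nlinarith [sq_nonneg (|e - a| - γ / 2), sq_abs (e - a), abs_nonneg a]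

lemma huber_eq (γ e : ℝ) (hγ : 0 < γ) : ∃ a : ℝ, (e - a) ^ 2 + γ * |a| = huber γ e := by
  unfold huber
  split_ifs with h
  · exact ⟨0, by simp⟩
  · push_neg at h
    rcases le_or_gt 0 e with he | he
    · refine ⟨e - γ / 2, ?_⟩
      rw [abs_of_nonneg he] at h ⊢
      rw [abs_of_nonneg (by linarith : (0:ℝ) ≤ e - γ / 2)]
      ring
    · refine ⟨e + γ / 2, ?_⟩
      rw [abs_of_neg he] at h ⊢
      rw [abs_of_neg (by linarith : e + γ / 2 < 0)]
      ring

/-- Value-level content of Proposition 1: the robust (Huber-loss) regularized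
objective `F(θ) = Σᵢ ρ_γ(r θ i) + R(θ)` and the squared-error objective with
ℓ1-penalized outliers `G(θ, a) = Σᵢ (r θ i - a i)² + γ Σᵢ |a i| + R(θ)` have the
same infimum. -/
theorem huber_outlier_inf_eq {P : Type*} {ι : Type*} [Fintype ι]
    (r : P → ι → ℝ) (R : P → ℝ) (γ : ℝ) (hγ : 0 < γ) :
    sInf (Set.range fun θ : P => (∑ i, huber γ (r θ i)) + R θ) =
      sInf (Set.range fun p : P × (ι → ℝ) =>
        (∑ i, (r p.1 i - p.2 i) ^ 2) + γ * (∑ i, |p.2 i|) + R p.1) := by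
  set F : P → ℝ := fun θ => (∑ i, huber γ (r θ i)) + R θ with hF
  set G : P × (ι → ℝ) → ℝ := fun p =>
    (∑ i, (r p.1 i - p.2 i) ^ 2) + γ * (∑ i, |p.2 i|) + R p.1 with hG
  have hsub : Set.range F ⊆ Set.range G := by
    rintro _ ⟨θ, rfl⟩
    choose a ha using fun i => huber_eq γ (r θ i) hγ
    refine ⟨(θ, a), ?_⟩
    simp only [hG, hF]
    rw [Finset.mul_sum, ← Finset.sum_add_distrib]
    rw [Finset.sum_congr rfl fun i _ => ha i]
  have hdom : ∀ t ∈ Set.range G, ∃ s ∈ Set.range F, s ≤ t := by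
    rintro _ ⟨⟨θ, a⟩, rfl⟩
    refine ⟨F θ, ⟨θ, rfl⟩, ?_⟩
    simp only [hF, hG]
    have : (∑ i, huber γ (r θ i)) ≤ ∑ i, ((r θ i - a i) ^ 2 + γ * |a i|) :=
      Finset.sum_le_sum fun i _ => huber_le γ (r θ i) (a i) hγ
    rw [Finset.sum_add_distrib, ← Finset.mul_sum] at this
    linarith
  by_cases hP : Nonempty P
  · have hSne : (Set.range F).Nonempty := Set.range_nonempty _
    have hTne : (Set.range G).Nonempty := hSne.mono hsub
    by_cases hbdd : BddBelow (Set.range F)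
    · have hTbdd : BddBelow (Set.range G) := by
        obtain ⟨m, hm⟩ := hbdd
        refine ⟨m, fun t ht => ?_⟩
        obtain ⟨s, hs, hst⟩ := hdom t ht
        exact le_trans (hm hs) hst
      refine le_antisymm ?_ (csInf_le_csInf hTbdd hSne hsub)
      refine le_csInf hTne fun t ht => ?_
      obtain ⟨s, hs, hst⟩ := hdom t ht
      exact le_trans (csInf_le hbdd hs) hst
    · have hTbdd : ¬ BddBelow (Set.range G) := fun ⟨m, hm⟩ =>
        hbdd ⟨m, fun s hs => hm (hsub hs)⟩
      rw [Real.sInf_of_not_bddBelow hbdd, Real.sInf_of_not_bddBelow hTbdd]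
  · have h1 : Set.range F = ∅ := by
      simp [Set.range_eq_empty_iff, not_nonempty_iff.mp hP]
    have h2 : Set.range G = ∅ := by
      rw [Set.range_eq_empty_iff]
      exact ⟨fun p => hP ⟨p.1⟩⟩
    rw [h1, h2]
end
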